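/- arXiv:1805.11316 — 4 statements merged into one kernel-verified Lean document; each statement's English description precedes it below -/
import Mathlib

section
/- The operator T_{f,b} satisfies ‖T_{f,b} g − T_{f,b} h‖_p ≤ Λ ‖g − h‖_p for all g, h ∈ L^p(I) (1 ≤ p ≤ ∞). Consequently, since Λ < 1, T_{f,b} is a contraction on the Banach space L^p(I) and possesses a unique fixed point f *_T b ∈ L^p(I). -/
open MeasureTheory ENNReal

noncomputable section

/-- The inverse of the increasing affine map `L n` sending `[x 0, x N]` onto
`[x n, x (n+1)]` (so `L n (x 0) = x n.castSucc` and `L n (x N) = x n.succ`). -/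
def Linv {N : ℕ} (x : Fin (N + 1) → ℝ) (n : Fin N) (y : ℝ) : ℝ :=
  x 0 + (y - x n.castSucc) * (x (Fin.last N) - x 0) / (x n.succ - x n.castSucc)

/-- The subinterval `I n` of the partition: `[x 0, x 1]` for `n = 0` and
`(x n, x (n+1)]` otherwise. -/
def subInt {N : ℕ} (x : Fin (N + 1) → ℝ) (n : Fin N) : Set ℝ :=
  if n.val = 0 then Set.Icc (x n.castSucc) (x n.succ)
  else Set.Ioc (x n.castSucc) (x n.succ)

/-- `h` is the image of `g` under the Read–Bajraktarević operator `T_{f,b}` with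
scale functions `α`, almost everywhere: on each `I n`,
`h = f + (α n ∘ Lₙ⁻¹) · ((g - b) ∘ Lₙ⁻¹)`. -/
def RBEq {N : ℕ} (μ : Measure ℝ) (x : Fin (N + 1) → ℝ) (α : Fin N → ℝ → ℝ)
    (f b g h : ℝ → ℝ) : Prop :=
  ∀ n : Fin N, ∀ᵐ t ∂μ, t ∈ subInt x n →
    h t = f t + α n (Linv x n t) * (g (Linv x n t) - b (Linv x n t))

/-- `h` satisfies the self-referential equation of `T_{f,b}`, i.e. `h` is a fixed
point of `T_{f,b}`; `h` is then the fractal convolution `f *_T b`. -/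
def SelfRef {N : ℕ} (μ : Measure ℝ) (x : Fin (N + 1) → ℝ) (α : Fin N → ℝ → ℝ)
    (f b h : ℝ → ℝ) : Prop :=
  RBEq μ x α f b h h

/-! On each piece `Iₙ` we have `T g - T h = (αₙ ∘ Lₙ⁻¹) · ((g - h) ∘ Lₙ⁻¹)`. The map
`piecewiseLinv x`, equal to `Lₙ⁻¹` on `Iₙ`, preserves Lebesgue measure on `I`: `Lₙ⁻¹` pushes
`volume` on `Iₙ` forward to `|Iₙ| / |I|` times `volume` on `I`, and these ratios sum to `1`.
Hence `|T g - T h| ≤ Λ · |g - h| ∘ piecewiseLinv x` a.e., and since composition with a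
measure-preserving map is an isometry of `L^p`, `T` is `Λ`-Lipschitz for every `p` at once;
Banach's fixed point theorem gives the unique fixed point. -/

lemma map_volume_restrict_affine {a : ℝ} (ha : 0 < a) (b : ℝ) (s : Set ℝ) :
    Measure.map (fun t => a * t + b) (volume.restrict s)
      = ENNReal.ofReal a⁻¹ • volume.restrict ((fun t => a * t + b) '' s) := by
  have he : MeasurableEmbedding (fun t : ℝ => a * t + b) :=
    (affineHomeomorph a b ha.ne').measurableEmbedding
  have hmap : Measure.map (fun t : ℝ => a * t + b) volume = ENNReal.ofReal a⁻¹ • volume := by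
    rw [show (fun t : ℝ => a * t + b) = (· + b) ∘ (a * ·) from rfl,
      ← Measure.map_map (measurable_add_const b) (measurable_const_mul a),
      Real.map_volume_mul_left ha.ne', Measure.map_smul, map_add_right_eq_self,
      abs_of_pos (inv_pos.2 ha)]
  conv_lhs => rw [← Set.preimage_image_eq s he.injective]
  rw [← he.restrict_map, hmap, Measure.restrict_smul]

section Partition

variable {N : ℕ} {x : Fin (N + 1) → ℝ}

lemma Linv_eq_affine (x : Fin (N + 1) → ℝ) (n : Fin N) :
    Linv x n = fun t => (x (Fin.last N) - x 0) / (x n.succ - x n.castSucc) * t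
      + (x 0 - (x (Fin.last N) - x 0) / (x n.succ - x n.castSucc) * x n.castSucc) := by
  funext t
  unfold Linv
  ring

lemma measurable_Linv (x : Fin (N + 1) → ℝ) (n : Fin N) : Measurable (Linv x n) := by
  rw [Linv_eq_affine]
  fun_prop

lemma measurableSet_subInt (x : Fin (N + 1) → ℝ) (n : Fin N) : MeasurableSet (subInt x n) := by
  unfold subInt
  split_ifs
  exacts [measurableSet_Icc, measurableSet_Ioc]

lemma subInt_subset_Icc (x : Fin (N + 1) → ℝ) (n : Fin N) :
    subInt x n ⊆ Set.Icc (x n.castSucc) (x n.succ) := by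
  unfold subInt
  split_ifs
  exacts [subset_rfl, Set.Ioc_subset_Icc_self]

lemma subInt_ae_eq_Icc (x : Fin (N + 1) → ℝ) (n : Fin N) :
    subInt x n =ᵐ[volume] Set.Icc (x n.castSucc) (x n.succ) := by
  unfold subInt
  split_ifs
  exacts [.rfl, Ioc_ae_eq_Icc]

lemma pairwise_disjoint_subInt (hx : StrictMono x) :
    Pairwise (Function.onFun Disjoint (subInt x)) := by
  have key : ∀ n m : Fin N, n < m → Disjoint (subInt x n) (subInt x m) := by
    intro n m hnm
    have hm : m.val ≠ 0 := by omega
    refine Set.disjoint_left.2 fun t htn htm => ?_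
    have h1 : t ≤ x n.succ := (subInt_subset_Icc x n htn).2
    have h2 : x m.castSucc < t := by
      unfold subInt at htm
      rw [if_neg hm] at htm
      exact htm.1
    have h3 : x n.succ ≤ x m.castSucc := hx.monotone (Fin.succ_le_castSucc_iff.2 hnm)
    linarith
  intro n m hnm
  rcases lt_or_gt_of_ne hnm with h | h
  exacts [key n m h, (key m n h).symm]

lemma Icc_subset_iUnion_subInt (hx : Monotone x) (hN : 0 < N) :
    Set.Icc (x 0) (x (Fin.last N)) ⊆ ⋃ n, subInt x n := by
  intro t ht
  rcases ht.1.eq_or_lt with rfl | h0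
  · refine Set.mem_iUnion.2 ⟨⟨0, hN⟩, ?_⟩
    unfold subInt
    simpa using hx (Fin.zero_le _)
  · have hx_nat (i : ℕ) (hi : i < N + 1) : x (Fin.ofNat (N + 1) i) = x ⟨i, hi⟩ := by
      congr
      exact Fin.ext (Nat.mod_eq_of_lt hi)
    obtain ⟨i, hi, hti⟩ := Set.mem_iUnion₂.1 <| Ioc_subset_biUnion_Ioc N
      (fun i : ℕ => x (Fin.ofNat (N + 1) i))
      ⟨by simpa [hx_nat 0 N.succ_pos] using h0, by simpa [hx_nat N N.lt_succ_self] using ht.2⟩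
    rw [Finset.mem_range] at hi
    rw [hx_nat i (by omega), hx_nat (i + 1) (by omega)] at hti
    refine Set.mem_iUnion.2 ⟨⟨i, hi⟩, ?_⟩
    unfold subInt
    split_ifs
    exacts [Set.Ioc_subset_Icc_self hti, hti]

lemma volume_restrict_Icc_eq_sum_subInt (hx : StrictMono x) (hN : 0 < N) :
    volume.restrict (Set.Icc (x 0) (x (Fin.last N)))
      = Measure.sum fun n => volume.restrict (subInt x n) := by
  have hcover : Set.Icc (x 0) (x (Fin.last N)) = ⋃ n, subInt x n :=
    (Icc_subset_iUnion_subInt hx.monotone hN).antisymm <| Set.iUnion_subset fun n =>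
      (subInt_subset_Icc x n).trans <|
        Set.Icc_subset_Icc (hx.monotone (Fin.zero_le _)) (hx.monotone (Fin.le_last _))
  rw [hcover, Measure.restrict_iUnion (pairwise_disjoint_subInt hx) (measurableSet_subInt x)]

lemma sum_succ_sub_castSucc (x : Fin (N + 1) → ℝ) :
    ∑ n : Fin N, (x n.succ - x n.castSucc) = x (Fin.last N) - x 0 := by
  induction N with
  | zero => simp
  | succ m ih =>
    rw [Fin.sum_univ_castSucc]
    simp only [Fin.succ_castSucc]
    rw [ih (fun i => x i.castSucc), Fin.succ_last, Fin.castSucc_zero]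
    ring

lemma sum_ofReal_succ_sub_castSucc_div (hx : StrictMono x) (hN : 0 < N) :
    ∑ n : Fin N, ENNReal.ofReal ((x n.succ - x n.castSucc) / (x (Fin.last N) - x 0)) = 1 := by
  have hlen : 0 < x (Fin.last N) - x 0 := sub_pos.2 (hx (Fin.lt_def.2 hN))
  rw [← ENNReal.ofReal_sum_of_nonneg fun n _ =>
      div_nonneg (sub_nonneg.2 (hx Fin.castSucc_lt_succ).le) hlen.le,
    ← Finset.sum_div, sum_succ_sub_castSucc, div_self hlen.ne', ENNReal.ofReal_one]

lemma map_Linv_volume_restrict_subInt (hx : StrictMono x) (n : Fin N) :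
    Measure.map (Linv x n) (volume.restrict (subInt x n))
      = ENNReal.ofReal ((x n.succ - x n.castSucc) / (x (Fin.last N) - x 0))
        • volume.restrict (Set.Icc (x 0) (x (Fin.last N))) := by
  have hlen_n : 0 < x n.succ - x n.castSucc := sub_pos.2 (hx Fin.castSucc_lt_succ)
  have hlen : 0 < x (Fin.last N) - x 0 := hlen_n.trans_le <|
    sub_le_sub (hx.monotone (Fin.le_last _)) (hx.monotone (Fin.zero_le _))
  set a := (x (Fin.last N) - x 0) / (x n.succ - x n.castSucc)
  have ha : 0 < a := div_pos hlen hlen_n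
  have himage : (fun t => a * t + (x 0 - a * x n.castSucc)) '' Set.Icc (x n.castSucc) (x n.succ)
      = Set.Icc (x 0) (x (Fin.last N)) := by
    rw [show (fun t => a * t + (x 0 - a * x n.castSucc))
        = affineHomeomorph a (x 0 - a * x n.castSucc) ha.ne' from rfl,
      affineHomeomorph_image_Icc _ _ _ _ ha]
    congr 1
    · ring
    · simp only [a]
      field_simp
      ring
  rw [Measure.restrict_congr_set (subInt_ae_eq_Icc x n), Linv_eq_affine,
    map_volume_restrict_affine ha, himage, inv_div]

def piecewiseLinv (x : Fin (N + 1) → ℝ) (t : ℝ) : ℝ :=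
  ∑ n, (subInt x n).indicator (Linv x n) t

lemma piecewiseLinv_of_mem (hx : StrictMono x) {n : Fin N} {t : ℝ} (ht : t ∈ subInt x n) :
    piecewiseLinv x t = Linv x n t := by
  unfold piecewiseLinv
  rw [Finset.sum_eq_single n (fun m _ hmn => Set.indicator_of_notMem
      (Set.disjoint_left.1 (pairwise_disjoint_subInt hx hmn.symm) ht) _) (by simp),
    Set.indicator_of_mem ht]

lemma measurable_piecewiseLinv (x : Fin (N + 1) → ℝ) : Measurable (piecewiseLinv x) :=
  Finset.measurable_sum _ fun n _ => (measurable_Linv x n).indicator (measurableSet_subInt x n)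

theorem measurePreserving_piecewiseLinv (hx : StrictMono x) (hN : 0 < N) :
    MeasurePreserving (piecewiseLinv x) (volume.restrict (Set.Icc (x 0) (x (Fin.last N))))
      (volume.restrict (Set.Icc (x 0) (x (Fin.last N)))) := by
  refine ⟨measurable_piecewiseLinv x, ?_⟩
  have hpiece (n : Fin N) : Measure.map (piecewiseLinv x) (volume.restrict (subInt x n))
      = Measure.map (Linv x n) (volume.restrict (subInt x n)) :=
    Measure.map_congr <| (ae_restrict_mem (measurableSet_subInt x n)).mono
      fun t ht => piecewiseLinv_of_mem hx ht
  conv_lhs => rw [volume_restrict_Icc_eq_sum_subInt hx hN]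
  rw [Measure.map_sum (measurable_piecewiseLinv x).aemeasurable, Measure.sum_fintype]
  simp only [hpiece, map_Linv_volume_restrict_subInt hx]
  rw [← Finset.sum_smul, sum_ofReal_succ_sub_castSucc_div hx hN, one_smul]

end Partition

lemma MeasureTheory.Lp.ae_norm_le_norm_top {α E : Type*} [MeasurableSpace α] {μ : Measure α}
    [NormedAddCommGroup E] (f : Lp E ∞ μ) : ∀ᵐ y ∂μ, ‖f y‖ ≤ ‖f‖ := by
  filter_upwards [ae_le_eLpNormEssSup (f := f)] with y hy
  rw [Lp.norm_def, eLpNorm_exponent_top, ← toReal_enorm]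
  exact ENNReal.toReal_mono (by simpa [eLpNorm_exponent_top] using Lp.eLpNorm_ne_top f) hy

section Operator

variable {N : ℕ} {x : Fin (N + 1) → ℝ} {α : Fin N → ℝ → ℝ} {Λ : ℝ} {f b g g' h h' : ℝ → ℝ}

theorem RBEq.ae_norm_sub_le (hx : StrictMono x) (hN : 0 < N)
    (hα : ∀ n, ∀ᵐ y ∂volume.restrict (Set.Icc (x 0) (x (Fin.last N))), ‖α n y‖ ≤ Λ)
    (hg : RBEq (volume.restrict (Set.Icc (x 0) (x (Fin.last N)))) x α f b g h)
    (hg' : RBEq (volume.restrict (Set.Icc (x 0) (x (Fin.last N)))) x α f b g' h') :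
    ∀ᵐ t ∂volume.restrict (Set.Icc (x 0) (x (Fin.last N))),
      ‖h t - h' t‖ ≤ Λ * ‖g (piecewiseLinv x t) - g' (piecewiseLinv x t)‖ := by
  have hcover : ∀ᵐ t ∂volume.restrict (Set.Icc (x 0) (x (Fin.last N))), ∃ n, t ∈ subInt x n :=
    (ae_restrict_mem measurableSet_Icc).mono fun t ht =>
      Set.mem_iUnion.1 (Icc_subset_iUnion_subInt hx.monotone hN ht)
  have hα' : ∀ n, ∀ᵐ t ∂volume.restrict (Set.Icc (x 0) (x (Fin.last N))),
      ‖α n (piecewiseLinv x t)‖ ≤ Λ := fun n =>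
    (measurePreserving_piecewiseLinv hx hN).quasiMeasurePreserving.ae (hα n)
  filter_upwards [hcover, ae_all_iff.2 hg, ae_all_iff.2 hg', ae_all_iff.2 hα']
    with t ⟨n, ht⟩ hgt hgt' hαt
  have hαn : ‖α n (Linv x n t)‖ ≤ Λ := piecewiseLinv_of_mem hx ht ▸ hαt n
  rw [hgt n ht, hgt' n ht, piecewiseLinv_of_mem hx ht]
  calc ‖f t + α n (Linv x n t) * (g (Linv x n t) - b (Linv x n t))
        - (f t + α n (Linv x n t) * (g' (Linv x n t) - b (Linv x n t)))‖
      = ‖α n (Linv x n t)‖ * ‖g (Linv x n t) - g' (Linv x n t)‖ := by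
        rw [← norm_mul]
        ring_nf
    _ ≤ Λ * ‖g (Linv x n t) - g' (Linv x n t)‖ := by gcongr

theorem RBEq.norm_sub_le {p : ℝ≥0∞} (hx : StrictMono x) (hN : 0 < N)
    (hα : ∀ n, ∀ᵐ y ∂volume.restrict (Set.Icc (x 0) (x (Fin.last N))), ‖α n y‖ ≤ Λ)
    {u u' v v' : Lp ℝ p (volume.restrict (Set.Icc (x 0) (x (Fin.last N))))}
    (hu : RBEq (volume.restrict (Set.Icc (x 0) (x (Fin.last N)))) x α f b u v)
    (hu' : RBEq (volume.restrict (Set.Icc (x 0) (x (Fin.last N)))) x α f b u' v') :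
    ‖v - v'‖ ≤ Λ * ‖u - u'‖ := by
  have hφ := measurePreserving_piecewiseLinv hx hN
  calc ‖v - v'‖ ≤ Λ * ‖Lp.compMeasurePreserving _ hφ (u - u')‖ := by
        refine Lp.norm_le_mul_norm_of_ae_le_mul ?_
        filter_upwards [hu.ae_norm_sub_le hx hN hα hu', Lp.coeFn_sub v v',
          Lp.coeFn_compMeasurePreserving (u - u') hφ, hφ.quasiMeasurePreserving.ae
          (Lp.coeFn_sub u u')] with t ht hv hcomp hsub
        rw [hv, hcomp, Function.comp_apply, hsub]
        exact ht
    _ = Λ * ‖u - u'‖ := by rw [Lp.norm_compMeasurePreserving]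

end Operator

/-- The operator `T_{f,b}` is Lipschitz with constant `Λ` on `L^p(I)`
and, since `Λ < 1`, it has a unique fixed point `f *_T b ∈ L^p(I)`. -/
theorem RB_operator_contraction_unique_fixed_point
    (N : ℕ) (hN : 2 ≤ N) (x : Fin (N + 1) → ℝ) (hx : StrictMono x)
    (μ : Measure ℝ) (hμ : μ = volume.restrict (Set.Icc (x 0) (x (Fin.last N))))
    (p : ℝ≥0∞) [Fact (1 ≤ p)]
    (α : Fin N → Lp ℝ ∞ μ)
    (Λ : ℝ) (hΛdef : Λ = ⨆ n : Fin N, ‖α n‖) (hΛ : Λ < 1)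
    (f b : Lp ℝ p μ)
    (T : Lp ℝ p μ → Lp ℝ p μ)
    (hT : ∀ g : Lp ℝ p μ, RBEq μ x (fun n => ⇑(α n)) ⇑f ⇑b ⇑g ⇑(T g)) :
    (∀ g h : Lp ℝ p μ, ‖T g - T h‖ ≤ Λ * ‖g - h‖) ∧
    (∃! fb : Lp ℝ p μ, T fb = fb) := by
  subst hμ
  have hα (n : Fin N) : ∀ᵐ y ∂volume.restrict (Set.Icc (x 0) (x (Fin.last N))), ‖α n y‖ ≤ Λ :=
    (Lp.ae_norm_le_norm_top (α n)).mono fun y hy =>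
      hy.trans <| hΛdef ▸ le_ciSup (f := fun n => ‖α n‖) (Set.finite_range _).bddAbove n
  have hLip (g h : Lp ℝ p _) : ‖T g - T h‖ ≤ Λ * ‖g - h‖ :=
    (hT g).norm_sub_le hx (by omega) hα (hT h)
  have hT_contracting : ContractingWith Λ.toNNReal T :=
    ⟨Real.toNNReal_lt_one.2 hΛ, LipschitzWith.of_dist_le' fun g h => by
      simpa only [dist_eq_norm] using hLip g h⟩
  exact ⟨hLip, ContractingWith.fixedPoint T hT_contracting, hT_contracting.fixedPoint_isFixedPt,
    fun _ hfb => hT_contracting.fixedPoint_unique hfb⟩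

end
end

section
/- Let f, b : I → ℝ be bounded functions, let f̃ : I → ℝ be the unique bounded function satisfying f̃(x) = f(x) + α_n(L_n^{−1}(x))·(f̃ − b)(L_n^{−1}(x)) for every x ∈ I_n and every n = 1,…,N, and let ε ≥ 0. If max{|f(x₀) − b(x₀)|, |f(x_N) − b(x_N)|} ≤ ε(1 − Λ), then sup{|f̃(x_n) − f(x_n)| : n = 0, 1, …, N} ≤ ε. -/
open MeasureTheory ENNReal

noncomputable section

/-! At the nodes the self-referential equation closes up: `Lₙ⁻¹` sends `x (n+1)` to `x N` and
`L₀⁻¹` fixes `x 0`. At `x 0` and at `x N` it therefore reads `f̃ - b = (f - b) + α · (f̃ - b)` at a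
single point, and the contraction `Λ < 1` turns `|f - b| ≤ ε (1 - Λ)` into `|f̃ - b| ≤ ε` there.
At every node `f̃ - f` equals `α · (f̃ - b)` at `x 0` or `x N`, hence is at most `Λ ε ≤ ε`. -/

theorem le_ciSup_ciSup_of_bddAbove {α ι κ : Type*} [ConditionallyCompleteLattice α] [Finite ι]
    {g : ι → κ → α} (hg : ∀ i, BddAbove (Set.range (g i))) (i : ι) (k : κ) :
    g i k ≤ ⨆ i, ⨆ k, g i k :=
  (le_ciSup (hg i) k).trans (le_ciSup (f := fun i => ⨆ k, g i k) (Set.finite_range _).bddAbove i)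

theorem abs_sub_le_of_eq_add_mul_sub {u v w a Λ ε : ℝ} (hu : u = v + a * (u - w))
    (ha : |a| ≤ Λ) (hΛ : Λ < 1) (hv : |v - w| ≤ ε * (1 - Λ)) : |u - w| ≤ ε := by
  have hcontr : |u - w| ≤ ε * (1 - Λ) + Λ * |u - w| :=
    calc |u - w| = |(v - w) + a * (u - w)| := by congr 1; linarith
      _ ≤ |v - w| + |a| * |u - w| := (abs_add_le _ _).trans_eq (by rw [abs_mul])
      _ ≤ ε * (1 - Λ) + Λ * |u - w| := by gcongr
  nlinarith

theorem abs_sub_le_of_eq_add_mul {u v a p ε : ℝ} (hu : u = v + a * p) (ha : |a| ≤ 1)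
    (hp : |p| ≤ ε) : |u - v| ≤ ε := by
  rw [hu, add_sub_cancel_left, abs_mul]
  simpa using mul_le_mul ha hp (abs_nonneg _) zero_le_one

section Nodes

variable {N : ℕ} {x : Fin (N + 1) → ℝ}

theorem Linv_castSucc (n : Fin N) : Linv x n (x n.castSucc) = x 0 := by
  simp [Linv]

theorem Linv_succ (hx : StrictMono x) (n : Fin N) : Linv x n (x n.succ) = x (Fin.last N) := by
  have hlen : x n.succ - x n.castSucc ≠ 0 := (sub_pos.2 (hx n.castSucc_lt_succ)).ne'
  rw [Linv, mul_div_cancel_left₀ _ hlen]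
  ring

theorem succ_mem_subInt (hx : StrictMono x) (n : Fin N) : x n.succ ∈ subInt x n := by
  have hlt := hx n.castSucc_lt_succ
  unfold subInt
  split_ifs
  exacts [⟨hlt.le, le_rfl⟩, ⟨hlt, le_rfl⟩]

theorem castSucc_zero_mem_subInt [NeZero N] (hx : Monotone x) :
    x (0 : Fin N).castSucc ∈ subInt x 0 := by
  rw [subInt, if_pos (Fin.val_zero N)]
  exact ⟨le_rfl, hx (Fin.castSucc_le_succ 0)⟩

end Nodes

theorem fractal_convolution_close_at_nodes_general
    (N : ℕ) (hN : 2 ≤ N) (x : Fin (N + 1) → ℝ) (hx : StrictMono x)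
    (α : Fin N → ℝ → ℝ)
    (hαbdd : ∀ n : Fin N,
      BddAbove (Set.range fun t : Set.Icc (x 0) (x (Fin.last N)) => |α n t|))
    (Λ : ℝ)
    (hΛdef : Λ = ⨆ n : Fin N, ⨆ t : Set.Icc (x 0) (x (Fin.last N)), |α n t|)
    (hΛ : Λ < 1)
    (f b ft : ℝ → ℝ)
    (hfix : ∀ n : Fin N, ∀ t ∈ subInt x n,
      ft t = f t + α n (Linv x n t) * (ft (Linv x n t) - b (Linv x n t)))
    (ε : ℝ)
    (hend : max |f (x 0) - b (x 0)| |f (x (Fin.last N)) - b (x (Fin.last N))|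
      ≤ ε * (1 - Λ)) :
    ∀ n : Fin (N + 1), |ft (x n) - f (x n)| ≤ ε := by
  obtain ⟨k, rfl⟩ : ∃ k, N = k + 1 := ⟨N - 1, by omega⟩
  have hα : ∀ n, ∀ t ∈ Set.Icc (x 0) (x (Fin.last _)), |α n t| ≤ Λ := fun n t ht =>
    hΛdef ▸ le_ciSup_ciSup_of_bddAbove hαbdd n ⟨t, ht⟩
  have hx0N : x 0 ≤ x (Fin.last _) := hx.monotone (Fin.zero_le _)
  have hfix0 : ft (x 0) = f (x 0) + α 0 (x 0) * (ft (x 0) - b (x 0)) := by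
    have h := hfix 0 _ (castSucc_zero_mem_subInt hx.monotone)
    rwa [Linv_castSucc, Fin.castSucc_zero] at h
  have hfixSucc : ∀ n : Fin (k + 1), ft (x n.succ) =
      f (x n.succ) + α n (x (Fin.last _)) * (ft (x (Fin.last _)) - b (x (Fin.last _))) :=
    fun n => by simpa only [Linv_succ hx] using hfix n _ (succ_mem_subInt hx n)
  have hα0 := hα 0 (x 0) (Set.left_mem_Icc.2 hx0N)
  have hαN := fun n => hα n (x (Fin.last _)) (Set.right_mem_Icc.2 hx0N)
  have hleft : |ft (x 0) - b (x 0)| ≤ ε :=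
    abs_sub_le_of_eq_add_mul_sub hfix0 hα0 hΛ (le_of_max_le_left hend)
  have hright : |ft (x (Fin.last _)) - b (x (Fin.last _))| ≤ ε := by
    refine abs_sub_le_of_eq_add_mul_sub ?_ (hαN (Fin.last k)) hΛ (le_of_max_le_right hend)
    simpa only [Fin.succ_last] using hfixSucc (Fin.last k)
  intro n
  cases n using Fin.cases with
  | zero => exact abs_sub_le_of_eq_add_mul hfix0 (hα0.trans hΛ.le) hleft
  | succ n => exact abs_sub_le_of_eq_add_mul (hfixSucc n) ((hαN n).trans hΛ.le) hright

/-- If `max{|f(x₀) − b(x₀)|, |f(x_N) − b(x_N)|} ≤ ε(1 − Λ)`, then the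
fractal convolution `f̃` (the unique bounded solution of the self-referential
equation) satisfies `|f̃(xₙ) − f(xₙ)| ≤ ε` at every node of the partition. -/
theorem fractal_convolution_close_at_nodes
    (N : ℕ) (hN : 2 ≤ N) (x : Fin (N + 1) → ℝ) (hx : StrictMono x)
    (α : Fin N → ℝ → ℝ)
    (hαbdd : ∀ n : Fin N,
      BddAbove (Set.range fun t : Set.Icc (x 0) (x (Fin.last N)) => |α n t|))
    (Λ : ℝ)
    (hΛdef : Λ = ⨆ n : Fin N, ⨆ t : Set.Icc (x 0) (x (Fin.last N)), |α n t|)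
    (hΛ : Λ < 1)
    (f b ft : ℝ → ℝ)
    (hf : Bornology.IsBounded (f '' Set.Icc (x 0) (x (Fin.last N))))
    (hb : Bornology.IsBounded (b '' Set.Icc (x 0) (x (Fin.last N))))
    (hft : Bornology.IsBounded (ft '' Set.Icc (x 0) (x (Fin.last N))))
    (hfix : ∀ n : Fin N, ∀ t ∈ subInt x n,
      ft t = f t + α n (Linv x n t) * (ft (Linv x n t) - b (Linv x n t)))
    (huniq : ∀ g : ℝ → ℝ, Bornology.IsBounded (g '' Set.Icc (x 0) (x (Fin.last N))) →
      (∀ n : Fin N, ∀ t ∈ subInt x n,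
        g t = f t + α n (Linv x n t) * (g (Linv x n t) - b (Linv x n t))) →
      ∀ t ∈ Set.Icc (x 0) (x (Fin.last N)), g t = ft t)
    (ε : ℝ) (hε : 0 ≤ ε)
    (hend : max |f (x 0) - b (x 0)| |f (x (Fin.last N)) - b (x (Fin.last N))|
      ≤ ε * (1 - Λ)) :
    ∀ n : Fin (N + 1), |ft (x n) - f (x n)| ≤ ε :=
  fractal_convolution_close_at_nodes_general N hN x hx α hαbdd Λ hΛdef hΛ f b ft hfix ε hend

end
end

section
/- For 0 < p < 1, equip L^p(I) with the translation-invariant metric d_p(g,h) = ∫_I |g(x) − h(x)|^p dx. For all f, b ∈ L^p(I), the fractal convolution f *_T b (the unique fixed point of T_{f,b}, which is a contraction on (L^p(I), d_p) with contraction factor Λ^p) satisfies d_p(f *_T b, f) ≤ (Λ^p/(1−Λ^p)) d_p(f, b). -/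
open MeasureTheory ENNReal

noncomputable section

/-! On each piece `I_n` the self-referential equation reads `fb - f = (α_n · (fb - b)) ∘ L_n⁻¹`.
Changing variables along the affine map `L_n⁻¹` and summing over `n` (the weights `|I_n| / |I|`
add up to one) gives `d_p(fb, f) ≤ Λ^p d_p(fb, b)`. For `p ≤ 1` the map `t ↦ t^p` is subadditive,
so `d_p(fb, b) ≤ d_p(fb, f) + d_p(f, b)`; solving `d_p(fb, f) ≤ Λ^p (d_p(fb, f) + d_p(f, b))`
for the finite quantity `d_p(fb, f)` gives the bound. -/

open Set

theorem lintegral_comp_mul_add_Ioc (H : ℝ → ℝ≥0∞) {m : ℝ} (hm : 0 < m) (k a b : ℝ) :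
    ENNReal.ofReal m * ∫⁻ t in Ioc a b, H (m * t + k) =
      ∫⁻ s in Ioc (m * a + k) (m * b + k), H s := by
  have hinj : Function.Injective fun t : ℝ => m * t + k := fun s t hst => by
    simpa [hm.ne'] using hst
  have hderiv (t : ℝ) : HasDerivWithinAt (fun t => m * t + k) m (Ioc a b) t := by
    simpa using ((hasDerivAt_id t).const_mul m).add_const k |>.hasDerivWithinAt
  rw [← image_affine_Ioc hm, lintegral_image_eq_lintegral_abs_deriv_mul measurableSet_Ioc
    (fun t _ => hderiv t) hinj.injOn, abs_of_pos hm, lintegral_const_mul' _ _ ofReal_ne_top]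

theorem volume_mul_lintegral_comp_Linv {N : ℕ} {x : Fin (N + 1) → ℝ} (hx : StrictMono x)
    (n : Fin N) (H : ℝ → ℝ≥0∞) :
    volume (Ioc (x 0) (x (Fin.last N))) *
        ∫⁻ t in Ioc (x n.castSucc) (x n.succ), H (Linv x n t) =
      volume (Ioc (x n.castSucc) (x n.succ)) * ∫⁻ s in Ioc (x 0) (x (Fin.last N)), H s := by
  have hlen : 0 < x n.succ - x n.castSucc := sub_pos.2 (hx n.castSucc_lt_succ)
  set m := (x (Fin.last N) - x 0) / (x n.succ - x n.castSucc) with hm_def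
  have hm : 0 < m := div_pos (sub_pos.2 <| (hx.monotone (Fin.zero_le _)).trans_lt
    ((hx n.castSucc_lt_succ).trans_le (hx.monotone (Fin.le_last _)))) hlen
  have hLinv : Linv x n = fun t => m * t + (x 0 - m * x n.castSucc) := by
    ext t; simp only [Linv, m]; ring
  have hleft : m * x n.castSucc + (x 0 - m * x n.castSucc) = x 0 := by ring
  have hright : m * x n.succ + (x 0 - m * x n.castSucc) = x (Fin.last N) := by
    rw [hm_def]; field_simp; ring
  have hvol : x (Fin.last N) - x 0 = (x n.succ - x n.castSucc) * m := by
    rw [hm_def]; field_simp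
  rw [Real.volume_Ioc, Real.volume_Ioc, hvol, ofReal_mul hlen.le, mul_assoc, hLinv,
    lintegral_comp_mul_add_Ioc H hm, hleft, hright]

theorem setLIntegral_Ioc_eq_sum {β : Type*} [LinearOrder β] [TopologicalSpace β]
    [OrderClosedTopology β] [MeasurableSpace β] [OpensMeasurableSpace β] (μ : Measure β)
    (H : β → ℝ≥0∞) :
    ∀ {N : ℕ} (x : Fin (N + 1) → β), Monotone x →
      ∫⁻ t in Ioc (x 0) (x (Fin.last N)), H t ∂μ =
        ∑ n : Fin N, ∫⁻ t in Ioc (x n.castSucc) (x n.succ), H t ∂μ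
  | 0, x, _ => by simp
  | N + 1, x, hx => by
    have hprefix := setLIntegral_Ioc_eq_sum μ H (x ∘ Fin.castSucc)
      (hx.comp Fin.strictMono_castSucc.monotone)
    simp only [Function.comp_apply, Fin.castSucc_zero, ← Fin.succ_castSucc] at hprefix
    rw [Fin.sum_univ_castSucc, ← hprefix, ← lintegral_union measurableSet_Ioc
      (Ioc_disjoint_Ioc_of_le le_rfl), Fin.succ_last,
      Ioc_union_Ioc_eq_Ioc (hx (Fin.zero_le _)) (hx (Fin.le_last _))]

theorem setLIntegral_enorm_rpow_le_of_ae_eq_mul_comp_Linv {N : ℕ} {x : Fin (N + 1) → ℝ}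
    (hx : StrictMono x) {p : ℝ} (hp : 0 ≤ p) {α : Fin N → ℝ → ℝ} {C : ℝ≥0∞} (hC : C ≠ ∞)
    (hα : ∀ n, ∀ᵐ s ∂volume.restrict (Ioc (x 0) (x (Fin.last N))), ‖α n s‖ₑ ≤ C)
    {u v : ℝ → ℝ}
    (huv : ∀ n, ∀ᵐ t ∂volume.restrict (Ioc (x n.castSucc) (x n.succ)),
      u t = α n (Linv x n t) * v (Linv x n t)) :
    ∫⁻ t in Ioc (x 0) (x (Fin.last N)), ‖u t‖ₑ ^ p ≤
      C ^ p * ∫⁻ t in Ioc (x 0) (x (Fin.last N)), ‖v t‖ₑ ^ p := by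
  set I := Ioc (x 0) (x (Fin.last N))
  set J := fun n : Fin N => Ioc (x n.castSucc) (x n.succ)
  set V := ∫⁻ t in I, ‖v t‖ₑ ^ p
  have hpiece (n : Fin N) :
      volume I * ∫⁻ t in J n, ‖u t‖ₑ ^ p ≤ volume (J n) * (C ^ p * V) := by
    calc volume I * ∫⁻ t in J n, ‖u t‖ₑ ^ p
        = volume I * ∫⁻ t in J n, (‖α n (Linv x n t)‖ₑ * ‖v (Linv x n t)‖ₑ) ^ p := by
          congr 1
          exact lintegral_congr_ae ((huv n).mono fun t ht => by simp only [ht, enorm_mul])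
      _ = volume (J n) * ∫⁻ s in I, (‖α n s‖ₑ * ‖v s‖ₑ) ^ p :=
          volume_mul_lintegral_comp_Linv hx n fun s => (‖α n s‖ₑ * ‖v s‖ₑ) ^ p
      _ ≤ volume (J n) * (C ^ p * V) := by
          rw [← lintegral_const_mul' _ _ (rpow_ne_top_of_nonneg hp hC)]
          gcongr 1
          refine lintegral_mono_ae ((hα n).mono fun s hs => ?_)
          rw [mul_rpow_of_nonneg _ _ hp]
          gcongr
  by_cases hI : volume I = 0
  · simp [Measure.restrict_eq_zero.2 hI]
  have hsum : ∑ n, volume (J n) = volume I := by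
    simpa only [setLIntegral_one] using
      (setLIntegral_Ioc_eq_sum volume (fun _ => 1) x hx.monotone).symm
  refine (ENNReal.mul_le_mul_iff_right hI measure_Ioc_lt_top.ne).1 ?_
  calc volume I * ∫⁻ t in I, ‖u t‖ₑ ^ p
      = ∑ n, volume I * ∫⁻ t in J n, ‖u t‖ₑ ^ p := by
        rw [setLIntegral_Ioc_eq_sum volume _ x hx.monotone, Finset.mul_sum]
    _ ≤ ∑ n, volume (J n) * (C ^ p * V) := Finset.sum_le_sum fun n _ => hpiece n
    _ = volume I * (C ^ p * V) := by rw [← Finset.sum_mul, hsum]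

theorem RBEq.ae_restrict_Ioc {N : ℕ} {x : Fin (N + 1) → ℝ} (hx : Monotone x)
    {α : Fin N → ℝ → ℝ} {f b g h : ℝ → ℝ}
    (hrb : RBEq (volume.restrict (Icc (x 0) (x (Fin.last N)))) x α f b g h) (n : Fin N) :
    ∀ᵐ t ∂volume.restrict (Ioc (x n.castSucc) (x n.succ)),
      h t - f t = α n (Linv x n t) * (g (Linv x n t) - b (Linv x n t)) := by
  have hsub : Ioc (x n.castSucc) (x n.succ) ⊆ Icc (x 0) (x (Fin.last N)) :=
    Ioc_subset_Icc_self.trans (Icc_subset_Icc (hx (Fin.zero_le _)) (hx (Fin.le_last _)))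
  have hsubInt : Ioc (x n.castSucc) (x n.succ) ⊆ subInt x n := by
    unfold subInt; split_ifs
    exacts [Ioc_subset_Icc_self, subset_rfl]
  filter_upwards [ae_restrict_of_ae_restrict_of_subset hsub (hrb n),
    ae_restrict_mem measurableSet_Ioc] with t ht hmem
  rw [ht (hsubInt hmem), add_sub_cancel_left]

theorem MeasureTheory.Lp.ae_enorm_le_ofReal_norm {β E : Type*} [MeasurableSpace β] {μ : Measure β}
    [NormedAddCommGroup E] (g : Lp E ∞ μ) : ∀ᵐ s ∂μ, ‖g s‖ₑ ≤ ENNReal.ofReal ‖g‖ := by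
  rw [Lp.norm_def, ofReal_toReal (Lp.eLpNorm_ne_top g), eLpNorm_exponent_top]
  exact enorm_ae_le_eLpNormEssSup g μ

theorem lintegral_enorm_sub_rpow_le_add {β E : Type*} [MeasurableSpace β] {μ : Measure β}
    [NormedAddCommGroup E] {p : ℝ} (hp0 : 0 ≤ p) (hp1 : p ≤ 1) {g h k : β → E}
    (hgk : AEStronglyMeasurable (fun t => g t - k t) μ) :
    ∫⁻ t, ‖g t - h t‖ₑ ^ p ∂μ ≤ ∫⁻ t, ‖g t - k t‖ₑ ^ p ∂μ + ∫⁻ t, ‖k t - h t‖ₑ ^ p ∂μ := by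
  rw [← lintegral_add_left' (hgk.enorm.pow_const p)]
  refine lintegral_mono fun t => ?_
  calc ‖g t - h t‖ₑ ^ p ≤ (‖g t - k t‖ₑ + ‖k t - h t‖ₑ) ^ p := by
        rw [← sub_add_sub_cancel (g t) (k t) (h t)]
        gcongr
        exact enorm_add_le _ _
    _ ≤ ‖g t - k t‖ₑ ^ p + ‖k t - h t‖ₑ ^ p := rpow_add_le_add_rpow _ _ hp0 hp1

theorem MeasureTheory.MemLp.lintegral_enorm_rpow_ne_top {β E : Type*} [MeasurableSpace β]
    {μ : Measure β} [NormedAddCommGroup E] {p : ℝ} (hp : 0 < p) {g : β → E} (hg : MemLp g (ENNReal.ofReal p) μ) :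
    ∫⁻ t, ‖g t‖ₑ ^ p ∂μ ≠ ∞ := by
  simpa [toReal_ofReal hp.le] using
    (lintegral_rpow_enorm_lt_top_of_eLpNorm_lt_top (by simpa using hp) ofReal_ne_top
      hg.eLpNorm_lt_top).ne

theorem integral_abs_rpow_eq_toReal_lintegral {β : Type*} [MeasurableSpace β] {μ : Measure β}
    {p : ℝ} (hp : 0 ≤ p) {g : β → ℝ} (hg : AEStronglyMeasurable g μ) :
    ∫ t, |g t| ^ p ∂μ = (∫⁻ t, ‖g t‖ₑ ^ p ∂μ).toReal := by
  rw [← integral_toReal (hg.enorm.pow_const p)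
    (.of_forall fun t => rpow_lt_top_of_nonneg hp enorm_ne_top)]
  simp [← toReal_rpow]

theorem toReal_le_div_one_sub_mul_of_le_mul_add {a b q : ℝ≥0∞} (ha : a ≠ ∞) (hb : b ≠ ∞)
    (hq : q < 1) (h : a ≤ q * (a + b)) :
    a.toReal ≤ q.toReal / (1 - q.toReal) * b.toReal := by
  have hq' : q.toReal < 1 := toReal_lt_of_lt_ofReal (by simpa using hq)
  have hreal : a.toReal ≤ q.toReal * (a.toReal + b.toReal) := by
    simpa [toReal_mul, toReal_add ha hb] using
      toReal_mono (mul_ne_top (hq.trans one_lt_top).ne (add_ne_top.2 ⟨ha, hb⟩)) h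
  rw [div_mul_eq_mul_div, le_div_iff₀ (sub_pos.2 hq')]
  linarith

theorem fractal_convolution_distance_to_seed_small_p_general
    (N : ℕ) (x : Fin (N + 1) → ℝ) (hx : StrictMono x)
    (μ : Measure ℝ) (hμ : μ = volume.restrict (Set.Icc (x 0) (x (Fin.last N))))
    (p : ℝ) (hp0 : 0 < p) (hp1 : p < 1)
    (α : Fin N → Lp ℝ ∞ μ)
    (Λ : ℝ) (hΛdef : Λ = ⨆ n : Fin N, ‖α n‖) (hΛ : Λ < 1)
    (f b fb : ℝ → ℝ)
    (hf : MemLp f (ENNReal.ofReal p) μ) (hb : MemLp b (ENNReal.ofReal p) μ)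
    (hfbmem : MemLp fb (ENNReal.ofReal p) μ)
    (hfb : SelfRef μ x (fun n => ⇑(α n)) f b fb) :
    ∫ t, |fb t - f t| ^ p ∂μ ≤ Λ ^ p / (1 - Λ ^ p) * ∫ t, |f t - b t| ^ p ∂μ := by
  subst hμ
  have hΛ0 : 0 ≤ Λ := hΛdef ▸ Real.iSup_nonneg fun n => norm_nonneg _
  have hα (n : Fin N) : ∀ᵐ s ∂volume.restrict (Ioc (x 0) (x (Fin.last N))),
      ‖α n s‖ₑ ≤ ENNReal.ofReal Λ := by
    refine ae_restrict_of_ae_restrict_of_subset Ioc_subset_Icc_self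
      ((Lp.ae_enorm_le_ofReal_norm (α n)).mono fun s hs => hs.trans (ofReal_le_ofReal ?_))
    exact hΛdef ▸ le_ciSup (f := fun n => ‖α n‖) (finite_range _).bddAbove n
  have hcontract := setLIntegral_enorm_rpow_le_of_ae_eq_mul_comp_Linv hx hp0.le ofReal_ne_top hα
    (u := fun t => fb t - f t) (v := fun t => fb t - b t) (RBEq.ae_restrict_Ioc hx.monotone hfb)
  rw [← Measure.restrict_congr_set Ioc_ae_eq_Icc] at hf hb hfbmem ⊢
  have htriangle := lintegral_enorm_sub_rpow_le_add (h := b) hp0.le hp1.le (hfbmem.1.sub hf.1)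
  have hq : ENNReal.ofReal Λ ^ p < 1 := rpow_lt_one (ofReal_lt_one.2 hΛ) hp0
  have hΛp : Λ ^ p = (ENNReal.ofReal Λ ^ p).toReal := by rw [← toReal_rpow, toReal_ofReal hΛ0]
  rw [integral_abs_rpow_eq_toReal_lintegral hp0.le (g := fun t => fb t - f t) (hfbmem.1.sub hf.1),
    integral_abs_rpow_eq_toReal_lintegral hp0.le (g := fun t => f t - b t) (hf.1.sub hb.1), hΛp]
  exact toReal_le_div_one_sub_mul_of_le_mul_add ((hfbmem.sub hf).lintegral_enorm_rpow_ne_top hp0)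
    ((hf.sub hb).lintegral_enorm_rpow_ne_top hp0) hq (hcontract.trans (by gcongr))

/-- For `0 < p < 1`, with `d_p(g,h) = ∫_I |g − h|^p`, the fractal
convolution `f *_T b` (the unique fixed point of the contraction `T_{f,b}` on
`(L^p(I), d_p)`, whose contraction factor is `Λ^p`) satisfies
`d_p(f *_T b, f) ≤ (Λ^p/(1 − Λ^p)) d_p(f, b)`. -/
theorem fractal_convolution_distance_to_seed_small_p
    (N : ℕ) (hN : 2 ≤ N) (x : Fin (N + 1) → ℝ) (hx : StrictMono x)
    (μ : Measure ℝ) (hμ : μ = volume.restrict (Set.Icc (x 0) (x (Fin.last N))))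
    (p : ℝ) (hp0 : 0 < p) (hp1 : p < 1)
    (α : Fin N → Lp ℝ ∞ μ)
    (Λ : ℝ) (hΛdef : Λ = ⨆ n : Fin N, ‖α n‖) (hΛ : Λ < 1)
    (f b fb : ℝ → ℝ)
    (hf : MemLp f (ENNReal.ofReal p) μ) (hb : MemLp b (ENNReal.ofReal p) μ)
    (hfbmem : MemLp fb (ENNReal.ofReal p) μ)
    (hfb : SelfRef μ x (fun n => ⇑(α n)) f b fb)
    (huniq : ∀ g : ℝ → ℝ, MemLp g (ENNReal.ofReal p) μ →
      SelfRef μ x (fun n => ⇑(α n)) f b g → g =ᵐ[μ] fb) :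
    ∫ t, |fb t - f t| ^ p ∂μ ≤ Λ ^ p / (1 - Λ ^ p) * ∫ t, |f t - b t| ^ p ∂μ :=
  fractal_convolution_distance_to_seed_small_p_general N x hx μ hμ p hp0 hp1 α Λ hΛdef hΛ f b fb hf
    hb hfbmem hfb

end
end

section
/- If for every n = 1, …, N the scale function α_n is nonzero almost everywhere on I, then the linear operator P⁰₁ : L^p(I) → L^p(I), P⁰₁(b) = 0 *_T b (1 ≤ p ≤ ∞), is injective: if 0 *_T b = 0 in L^p(I), then b = 0 in L^p(I). -/
open MeasureTheory ENNReal

noncomputable section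

/-- Preimage of a Lebesgue-null set under a nondegenerate affine map is null. -/
lemma affine_preimage_null {c d : ℝ} (hc : c ≠ 0) {S : Set ℝ}
    (hS : volume S = 0) : volume ((fun t : ℝ => c * t + d) ⁻¹' S) = 0 := by
  have h1 : volume ((fun y : ℝ => y + d) ⁻¹' S) = 0 := by
    rw [measure_preimage_add_right volume d S]; exact hS
  have h2 : (fun t : ℝ => c * t + d) ⁻¹' S
      = (fun t : ℝ => c * t) ⁻¹' ((fun y : ℝ => y + d) ⁻¹' S) := rfl
  rw [h2, Real.volume_preimage_mul_left hc, h1, mul_zero]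

/-- Composition of an a.e. (volume) property with a nondegenerate affine map. -/
lemma ae_comp_affine {c d : ℝ} (hc : c ≠ 0) {Q : ℝ → Prop}
    (hQ : ∀ᵐ s : ℝ ∂volume, Q s) : ∀ᵐ t : ℝ ∂volume, Q (c * t + d) := by
  rw [ae_iff] at hQ ⊢
  have : {t : ℝ | ¬ Q (c * t + d)} = (fun t : ℝ => c * t + d) ⁻¹' {s : ℝ | ¬ Q s} := rfl
  rw [this]
  exact affine_preimage_null hc hQ

/-- If every scale function `α n` is nonzero almost everywhere on
`I`, then the operator `P⁰₁ b = 0 *_T b` is injective on `L^p(I)`. -/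
theorem partial_convolution_null_seed_injective
    (N : ℕ) (hN : 2 ≤ N) (x : Fin (N + 1) → ℝ) (hx : StrictMono x)
    (μ : Measure ℝ) (hμ : μ = volume.restrict (Set.Icc (x 0) (x (Fin.last N))))
    (p : ℝ≥0∞) [Fact (1 ≤ p)]
    (α : Fin N → Lp ℝ ∞ μ)
    (Λ : ℝ) (hΛdef : Λ = ⨆ n : Fin N, ‖α n‖) (hΛ : Λ < 1)
    (hα : ∀ n : Fin N, ∀ᵐ t ∂μ, (α n : ℝ → ℝ) t ≠ 0)
    (P₁ : Lp ℝ p μ → Lp ℝ p μ)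
    (hP₁ : ∀ b : Lp ℝ p μ, SelfRef μ x (fun n => ⇑(α n)) ⇑(0 : Lp ℝ p μ) ⇑b ⇑(P₁ b)) :
    ∀ b : Lp ℝ p μ, P₁ b = 0 → b = 0 := by
  intro b hb
  -- basic index facts
  have hv1 : ((1 : Fin (N + 1)) : ℕ) = 1 := by
    simp [Fin.val_one', Nat.mod_eq_of_lt (by omega : 1 < N + 1)]
  have h01 : (0 : Fin (N + 1)) < 1 := by
    rw [Fin.lt_def, hv1]; simp
  have h1N : (1 : Fin (N + 1)) ≤ Fin.last N := by
    rw [Fin.le_def, hv1]; simpa using (by omega : 1 ≤ N)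
  have hx01 : x 0 < x 1 := hx h01
  have hx1N : x 1 ≤ x (Fin.last N) := hx.monotone h1N
  set I : Set ℝ := Set.Icc (x 0) (x (Fin.last N)) with hIdef
  -- the index n = 0
  have hNpos : 0 < N := by omega
  set n0 : Fin N := ⟨0, hNpos⟩ with hn0
  have hcast : x n0.castSucc = x 0 := by congr 1
  have hsucc : x n0.succ = x 1 := by
    congr 1
    rw [Fin.ext_iff, hv1]
    rfl
  have hsub : subInt x n0 = Set.Icc (x 0) (x 1) := by
    rw [subInt, if_pos rfl, hcast, hsucc]
  -- affine form of `Linv x n0`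
  set A : ℝ := x (Fin.last N) - x 0 with hA
  set B : ℝ := x 1 - x 0 with hB
  have hApos : 0 < A := by simp only [hA]; linarith
  have hBpos : 0 < B := by simp only [hB]; linarith
  set c : ℝ := A / B with hc
  have hcpos : 0 < c := div_pos hApos hBpos
  set d : ℝ := x 0 - c * x 0 with hd
  have hL : ∀ t, Linv x n0 t = c * t + d := by
    intro t
    simp only [Linv, hcast, hsucc, hc, hd, hA, hB]
    field_simp
    ring
  have hcB : c * B = A := div_mul_cancel₀ A hBpos.ne'
  -- `Linv x n0` maps `[x 0, x 1]` into `I`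
  have hmem : ∀ t ∈ Set.Icc (x 0) (x 1), Linv x n0 t ∈ I := by
    intro t ht
    obtain ⟨ht1, ht2⟩ := ht
    rw [hL]
    constructor
    · have h1 : 0 ≤ c * (t - x 0) := mul_nonneg hcpos.le (by linarith)
      have e : c * (t - x 0) = c * t - c * x 0 := by ring
      simp only [hd]; linarith
    · have h2 : c * (t - x 0) ≤ c * B := by
        apply mul_le_mul_of_nonneg_left _ hcpos.le
        simp only [hB]; linarith
      have e : c * (t - x 0) = c * t - c * x 0 := by ring
      simp only [hd, hA] at *
      linarith
  -- unpack the a.e. hypotheses into volume-a.e. form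
  have hbae : ⇑(P₁ b) =ᵐ[μ] 0 := by
    rw [← Lp.eq_zero_iff_ae_eq_zero]; exact hb
  have hh0 : ∀ᵐ s ∂volume, s ∈ I → (P₁ b : ℝ → ℝ) s = 0 := by
    rw [← ae_restrict_iff' measurableSet_Icc, ← hμ]
    filter_upwards [hbae] with s hs using hs
  have hz0 : ∀ᵐ s ∂volume, s ∈ I → (0 : Lp ℝ p μ) s = 0 := by
    rw [← ae_restrict_iff' measurableSet_Icc, ← hμ]
    filter_upwards [Lp.coeFn_zero ℝ p μ] with s hs using hs
  have hα0 : ∀ᵐ s ∂volume, s ∈ I → (α n0 : ℝ → ℝ) s ≠ 0 := by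
    rw [← ae_restrict_iff' measurableSet_Icc, ← hμ]
    exact hα n0
  have hEq : ∀ᵐ t ∂volume, t ∈ I → (t ∈ subInt x n0 →
      (P₁ b : ℝ → ℝ) t = (0 : Lp ℝ p μ) t +
        (α n0 : ℝ → ℝ) (Linv x n0 t) *
          ((P₁ b : ℝ → ℝ) (Linv x n0 t) - (b : ℝ → ℝ) (Linv x n0 t))) := by
    rw [← ae_restrict_iff' measurableSet_Icc, ← hμ]
    exact hP₁ b n0
  -- compose the a.e. facts with the affine map `Linv x n0`
  have hh0' : ∀ᵐ t ∂volume, (c * t + d) ∈ I → (P₁ b : ℝ → ℝ) (c * t + d) = 0 :=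
    ae_comp_affine hcpos.ne' hh0
  have hα0' : ∀ᵐ t ∂volume, (c * t + d) ∈ I → (α n0 : ℝ → ℝ) (c * t + d) ≠ 0 :=
    ae_comp_affine hcpos.ne' hα0
  -- conclude `b ∘ Linv x n0 = 0` a.e. on `[x 0, x 1]`
  have hbL : ∀ᵐ t ∂volume, t ∈ Set.Icc (x 0) (x 1) → (b : ℝ → ℝ) (Linv x n0 t) = 0 := by
    filter_upwards [hEq, hh0, hz0, hh0', hα0'] with t h1 h2 h3 h4 h5 ht01
    have htI : t ∈ I := ⟨ht01.1, le_trans ht01.2 hx1N⟩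
    have hLI : Linv x n0 t ∈ I := hmem t ht01
    have hLI' : (c * t + d) ∈ I := by rw [← hL]; exact hLI
    have e1 := h1 htI (by rw [hsub]; exact ht01)
    rw [h2 htI, h3 htI] at e1
    rw [hL] at e1
    rw [h4 hLI'] at e1
    have h5' := h5 hLI'
    have : (α n0 : ℝ → ℝ) (c * t + d) * (0 - (b : ℝ → ℝ) (c * t + d)) = 0 := by linarith
    rcases mul_eq_zero.mp this with h | h
    · exact absurd h h5'
    · rw [hL]; linarith
  -- push forward along the inverse affine map to get `b = 0` a.e. on `I`
  set c' : ℝ := 1 / c with hc'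
  have hc'pos : 0 < c' := by positivity
  set d' : ℝ := x 0 - x 0 / c with hd'
  have hLM : ∀ s : ℝ, Linv x n0 (c' * s + d') = s := by
    intro s
    rw [hL]
    simp only [hc', hd', hd]
    field_simp
    ring
  have hMmem : ∀ s ∈ I, (c' * s + d') ∈ Set.Icc (x 0) (x 1) := by
    intro s hs
    obtain ⟨hs1, hs2⟩ := hs
    have e : c' * s + d' = x 0 + (s - x 0) / c := by
      simp only [hc', hd']; ring
    rw [e]
    constructor
    · have : 0 ≤ (s - x 0) / c := div_nonneg (by linarith) hcpos.le
      linarith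
    · have h2 : (s - x 0) / c ≤ B := by
        rw [div_le_iff₀ hcpos]
        have : c * B = A := hcB
        simp only [hA] at this ⊢
        nlinarith
      simp only [hB] at h2
      linarith
  have hbz : ∀ᵐ s ∂volume, s ∈ I → (b : ℝ → ℝ) s = 0 := by
    have := ae_comp_affine (c := c') (d := d') hc'pos.ne' hbL
    filter_upwards [this] with s hs hsI
    have := hs (hMmem s hsI)
    rwa [hLM s] at this
  rw [Lp.eq_zero_iff_ae_eq_zero]
  set g : ℝ → ℝ := ⇑b with hg
  rw [hμ]
  show ∀ᵐ s ∂(volume.restrict I), g s = (0 : ℝ → ℝ) s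
  rw [ae_restrict_iff' measurableSet_Icc]
  filter_upwards [hbz] with s hs hsI
  simpa using hs hsI

end
end
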